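/- (Lemma 3) Let Ω be an LT output degree distribution and let λ ∈ [0,1] satisfy ρ_λ = 0. If Ω_j > 0 for at least one odd j, then λ = 0. If Ω_j = 0 for all odd j, then λ ∈ {0, 1}. -/
import Mathlib

open Finset

noncomputable def rho (dmax : ℕ) (Ω : ℕ → ℝ) (lam : ℝ) : ℝ :=
  (1 / 2) * ∑ j ∈ Finset.Icc 1 dmax, Ω j * (1 - (1 - 2 * lam) ^ j)

/-- Lemma 3: let `λ ∈ [0,1]` satisfy `ρ_λ = 0`. If `Ω_j > 0` for at least one odd `j`,
then `λ = 0`. If `Ω_j = 0` for all odd `j`, then `λ ∈ {0,1}`. -/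
theorem stmt_11 (dmax : ℕ) (Ω : ℕ → ℝ)
    (hΩpos : ∀ j ∈ Finset.Icc 1 dmax, 0 ≤ Ω j)
    (hΩsum : ∑ j ∈ Finset.Icc 1 dmax, Ω j = 1)
    (lam : ℝ) (hlam : lam ∈ Set.Icc (0 : ℝ) 1) (hρ : rho dmax Ω lam = 0) :
    ((∃ j ∈ Finset.Icc 1 dmax, Odd j ∧ 0 < Ω j) → lam = 0) ∧
    ((∀ j ∈ Finset.Icc 1 dmax, Odd j → Ω j = 0) → lam = 0 ∨ lam = 1) := by
  obtain ⟨h0, h1⟩ := hlam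
  set x : ℝ := 1 - 2 * lam with hx
  have hxabs : |x| ≤ 1 := by
    rw [abs_le]; constructor <;> nlinarith
  have hterm : ∀ j ∈ Finset.Icc 1 dmax, 0 ≤ Ω j * (1 - x ^ j) := by
    intro j hj
    have hp : x ^ j ≤ 1 := by
      calc x ^ j ≤ |x ^ j| := le_abs_self _
        _ = |x| ^ j := abs_pow x j
        _ ≤ 1 := pow_le_one₀ (abs_nonneg x) hxabs
    exact mul_nonneg (hΩpos j hj) (by linarith)
  have hsum0 : ∑ j ∈ Finset.Icc 1 dmax, Ω j * (1 - x ^ j) = 0 := by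
    have := hρ
    unfold rho at this
    linarith
  have hall : ∀ j ∈ Finset.Icc 1 dmax, Ω j * (1 - x ^ j) = 0 :=
    (Finset.sum_eq_zero_iff_of_nonneg hterm).mp hsum0
  have key : ∀ j ∈ Finset.Icc 1 dmax, 0 < Ω j → x ^ j = 1 := by
    intro j hj hpos
    have := hall j hj
    rcases mul_eq_zero.mp this with h | h
    · exact absurd h (ne_of_gt hpos)
    · linarith
  have habs1 : ∀ j ∈ Finset.Icc 1 dmax, 0 < Ω j → |x| = 1 := by
    intro j hj hpos
    have hj1 : 1 ≤ j := (Finset.mem_Icc.mp hj).1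
    have h1 : |x| ^ j = 1 := by
      rw [← abs_pow, key j hj hpos, abs_one]
    by_contra hne
    have hlt : |x| < 1 := lt_of_le_of_ne hxabs hne
    have := pow_lt_one₀ (abs_nonneg x) hlt (by omega : j ≠ 0)
    linarith
  constructor
  · rintro ⟨j, hj, hodd, hpos⟩
    have hxj := key j hj hpos
    have h1 : |x| = 1 := habs1 j hj hpos
    have : x = 1 ∨ x = -1 := abs_eq (by norm_num : (0:ℝ) ≤ 1) |>.mp h1
    rcases this with h | h
    · -- x = 1 ⇒ lam = 0
      simp [hx] at h; linarith
    · exfalso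
      rw [h, hodd.neg_one_pow] at hxj
      norm_num at hxj
  · intro hoddzero
    -- exists j with Ω j > 0
    have : ∃ j ∈ Finset.Icc 1 dmax, 0 < Ω j := by
      by_contra hc
      push_neg at hc
      have : ∑ j ∈ Finset.Icc 1 dmax, Ω j = 0 :=
        Finset.sum_eq_zero fun j hj => le_antisymm (hc j hj) (hΩpos j hj)
      rw [hΩsum] at this; norm_num at this
    obtain ⟨j, hj, hpos⟩ := this
    have h1 : |x| = 1 := habs1 j hj hpos
    rcases (abs_eq (by norm_num : (0:ℝ) ≤ 1)).mp h1 with h | h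
    · left; simp [hx] at h; linarith
    · right; simp [hx] at h; linarith
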